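/- If π : X → Y is a fibration (has the homotopy lifting property with respect to all spaces), then the homotopic Švarc genus equals the Švarc genus: hsecat(π) = secat(π). -/

import Mathlib

open unitInterval in
/-- `f` and `g` are homotopic: there is a continuous homotopy between them. -/
def Htpy {A B : Type} [TopologicalSpace A] [TopologicalSpace B] (f g : A → B) : Prop :=
  ∃ H : C(A × I, B), (∀ a, H (a, 0) = f a) ∧ (∀ a, H (a, 1) = g a)

/-- The Švarc genus of `f` is at most `n`: the codomain has an open cover by `n + 1`
sets each admitting a continuous strict local section. -/
def SecatLe {X Y : Type} [TopologicalSpace X] [TopologicalSpace Y] (f : X → Y) (n : ℕ) : Prop :=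
  ∃ V : Fin (n + 1) → Set Y, (∀ i, IsOpen (V i)) ∧ (∀ y, ∃ i, y ∈ V i) ∧
    ∀ i, ∃ s : (V i) → X, Continuous s ∧ ∀ y : V i, f (s y) = (y : Y)

/-- The homotopic Švarc genus of `f` is at most `n`: open cover by `n + 1` sets each
admitting a continuous local homotopic section. -/
def HSecatLe {X Y : Type} [TopologicalSpace X] [TopologicalSpace Y] (f : X → Y) (n : ℕ) : Prop :=
  ∃ V : Fin (n + 1) → Set Y, (∀ i, IsOpen (V i)) ∧ (∀ y, ∃ i, y ∈ V i) ∧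
    ∀ i, ∃ s : (V i) → X, Continuous s ∧
      Htpy (fun y : V i => f (s y)) (fun y : V i => (y : Y))

/-- The Švarc genus. -/
noncomputable def secat {X Y : Type} [TopologicalSpace X] [TopologicalSpace Y]
    (f : X → Y) : ℕ∞ :=
  sInf {n : ℕ∞ | ∃ m : ℕ, n = (m : ℕ∞) ∧ SecatLe f m}

/-- The homotopic Švarc genus. -/
noncomputable def hsecat {X Y : Type} [TopologicalSpace X] [TopologicalSpace Y]
    (f : X → Y) : ℕ∞ :=
  sInf {n : ℕ∞ | ∃ m : ℕ, n = (m : ℕ∞) ∧ HSecatLe f m}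

open unitInterval in
/-- The homotopy lifting property with respect to all spaces. -/
def IsFibration {E B : Type} [TopologicalSpace E] [TopologicalSpace B] (p : E → B) : Prop :=
  ∀ (Z : Type) (_ : TopologicalSpace Z) (H : C(Z × I, B)) (h : Z → E), Continuous h →
    (∀ z, p (h z) = H (z, 0)) →
    ∃ G : C(Z × I, E), (∀ z, G (z, 0) = h z) ∧ ∀ q, p (G q) = H q

open unitInterval in
/-- The path fibration `PX → X × X`, sending a path to its endpoints. -/
def pathFib (X : Type) [TopologicalSpace X] : C(I, X) → X × X :=
  fun γ => (γ 0, γ 1)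

/-- Farber's (normalized) topological complexity of a space. -/
noncomputable def TCtop (X : Type) [TopologicalSpace X] : ℕ∞ :=
  secat (pathFib X)

/-!
A strict section is a homotopic one via the constant homotopy. Conversely, if `s` is a local
section with `p ∘ s` homotopic to the inclusion, the homotopy lifting property lifts this homotopy
to one starting at `s`; its end is a strict local section over the same open set.
-/

theorem Htpy.refl {A B : Type} [TopologicalSpace A] [TopologicalSpace B] {f : A → B}
    (hf : Continuous f) : Htpy f f :=
  ⟨⟨fun q => f q.1, hf.comp continuous_fst⟩, fun _ => rfl, fun _ => rfl⟩

theorem IsFibration.exists_lift_of_htpy {E B A : Type} [TopologicalSpace E] [TopologicalSpace B]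
    [TopologicalSpace A] {p : E → B} (hp : IsFibration p) {s : A → E} (hs : Continuous s)
    {g : A → B} (hsg : Htpy (fun a => p (s a)) g) :
    ∃ t : A → E, Continuous t ∧ ∀ a, p (t a) = g a := by
  obtain ⟨H, hH0, hH1⟩ := hsg
  obtain ⟨G, -, hpG⟩ := hp A inferInstance H s hs fun a => (hH0 a).symm
  exact ⟨fun a => G (a, 1), by fun_prop, fun a => by rw [hpG, hH1]⟩

theorem SecatLe.hsecatLe {X Y : Type} [TopologicalSpace X] [TopologicalSpace Y] {f : X → Y}
    {n : ℕ} (h : SecatLe f n) : HSecatLe f n := by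
  obtain ⟨V, hV, hcov, hsec⟩ := h
  refine ⟨V, hV, hcov, fun i => ?_⟩
  obtain ⟨s, hs, hfs⟩ := hsec i
  refine ⟨s, hs, ?_⟩
  simpa only [hfs] using Htpy.refl (continuous_subtype_val (p := (· ∈ V i)))

theorem HSecatLe.secatLe {X Y : Type} [TopologicalSpace X] [TopologicalSpace Y] {f : X → Y}
    (hf : IsFibration f) {n : ℕ} (h : HSecatLe f n) : SecatLe f n := by
  obtain ⟨V, hV, hcov, hsec⟩ := h
  refine ⟨V, hV, hcov, fun i => ?_⟩
  obtain ⟨s, hs, hfs⟩ := hsec i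
  exact hf.exists_lift_of_htpy hs hfs

theorem hsecatLe_iff_secatLe_of_isFibration {X Y : Type} [TopologicalSpace X]
    [TopologicalSpace Y] {f : X → Y} (hf : IsFibration f) (n : ℕ) :
    HSecatLe f n ↔ SecatLe f n :=
  ⟨HSecatLe.secatLe hf, SecatLe.hsecatLe⟩

theorem hsecat_eq_secat_of_fibration {X Y : Type} [TopologicalSpace X]
    [TopologicalSpace Y] (p : X → Y) (hfib : IsFibration p) :
    hsecat p = secat p := by
  simp only [hsecat, secat, hsecatLe_iff_secatLe_of_isFibration hfib]
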